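/- Safety–liveness duality: let P be the transition function of a finite MC over finite nonempty state type S with initial state s0, let G ⊆ S, and let B = B_P(G) be the set of states with no path to G under P. Then Prob_P(s0, G) + Prob_P(s0, B) ≥ 1. In particular, for every λ ∈ ℝ, if Prob_P(s0,G) ≤ λ (the MC violates the liveness property P_{>λ}(◇G)), then Prob_P(s0,B) ≥ 1 − λ (the MC violates the dual safety property P_{<1−λ}(◇B)). -/

import Mathlib

open scoped Classical BigOperators

/-- `n`-step reachability probability `Pr_P^n(s, G)`. -/
noncomputable def Pr {S : Type*} [Fintype S] (P : S → S → ℝ) : ℕ → S → Set S → ℝ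
  | 0, s, G => if s ∈ G then 1 else 0
  | n + 1, s, G => if s ∈ G then 1 else ∑ t, P s t * Pr P n t G

/-- Reachability probability `Prob_P(s, G) = ⨆ n, Pr_P^n(s, G)`. -/
noncomputable def Prob {S : Type*} [Fintype S] (P : S → S → ℝ) (s : S) (G : Set S) : ℝ :=
  ⨆ n : ℕ, Pr P n s G

/-- `C`-restriction of `P`: states outside `C` are made absorbing. -/
noncomputable def restrictMC {S : Type*} (C : Set S) (P : S → S → ℝ) (s t : S) : ℝ :=
  if s ∈ C then P s t else (if t = s then 1 else 0)

/-- `n`-step probability of reaching `B` while avoiding `G`. -/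
noncomputable def APr {S : Type*} [Fintype S] (P : S → S → ℝ) : ℕ → S → Set S → Set S → ℝ
  | 0, s, B, _ => if s ∈ B then 1 else 0
  | n + 1, s, B, G => if s ∈ B then 1 else if s ∈ G then 0 else ∑ t, P s t * APr P n t B G

/-- `AProb_P(s, B, G) = ⨆ n, APr_P^n(s, B, G)`. -/
noncomputable def AProb {S : Type*} [Fintype S] (P : S → S → ℝ) (s : S) (B G : Set S) : ℝ :=
  ⨆ n : ℕ, APr P n s B G

/-- `s` has a path to `G` under `P`. -/
def HasPathTo {S : Type*} (P : S → S → ℝ) (s : S) (G : Set S) : Prop :=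
  ∃ (m : ℕ) (u : ℕ → S), u 0 = s ∧ (∀ i < m, 0 < P (u i) (u (i + 1))) ∧ u m ∈ G

/-- `B_P(G)`: the set of states with no path to `G` under `P`. -/
def BSet {S : Type*} (P : S → S → ℝ) (G : Set S) : Set S :=
  {s | ¬ HasPathTo P s G}

/-- Transition function `P_r` of the instantiated MC `D_r` of a family `𝔓`. -/
noncomputable def Pinst {S K : Type*} [Fintype K] (𝔓 : S → K → ℝ) (r : K → S) (s t : S) : ℝ :=
  ∑ k, if r k = t then 𝔓 s k else 0

/-- Parameter `k` occurs at some state of `C`. -/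
def OccursIn {S K : Type*} (𝔓 : S → K → ℝ) (C : Set S) (k : K) : Prop :=
  ∃ s ∈ C, 0 < 𝔓 s k

/-- `u` is reachable from `s0` under `P`. -/
def ReachableFrom {S : Type*} (P : S → S → ℝ) (s0 u : S) : Prop :=
  ∃ (m : ℕ) (v : ℕ → S), v 0 = s0 ∧ (∀ i < m, 0 < P (v i) (v (i + 1))) ∧ v m = u

/-!
Let `T = G ∪ B_P(G)`. Every state has a path to `T`: states of `B_P(G)` trivially, all others by
definition of `B_P(G)`. On a finite chain this forces `T` to be reached almost surely: for some
horizon `N` every state reaches `T` within `N` steps with probability at least `1 - M > 0`, so the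
probability of missing `T` for `k N` steps is at most `M ^ k → 0`. Hence
`1 = Prob_P(s0, T) ≤ Prob_P(s0, G) + Prob_P(s0, B_P(G))`.
-/

section Reachability

variable {S : Type*} [Fintype S] {P : S → S → ℝ}

lemma Pr_nonneg (hP0 : ∀ s t, 0 ≤ P s t) (T : Set S) (n : ℕ) (s : S) : 0 ≤ Pr P n s T := by
  induction n generalizing s with
  | zero => unfold Pr; split_ifs <;> norm_num
  | succ n ih =>
    unfold Pr; split_ifs
    · exact zero_le_one
    · exact Finset.sum_nonneg fun t _ => mul_nonneg (hP0 s t) (ih t)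

lemma Pr_le_one (hP0 : ∀ s t, 0 ≤ P s t) (hP1 : ∀ s, ∑ t, P s t = 1) (T : Set S) (n : ℕ)
    (s : S) : Pr P n s T ≤ 1 := by
  induction n generalizing s with
  | zero => unfold Pr; split_ifs <;> norm_num
  | succ n ih =>
    unfold Pr; split_ifs
    · exact le_rfl
    · calc ∑ t, P s t * Pr P n t T ≤ ∑ t, P s t := by
            gcongr with t; exact mul_le_of_le_one_right (hP0 s t) (ih t)
        _ = 1 := hP1 s

lemma bddAbove_range_Pr (hP0 : ∀ s t, 0 ≤ P s t) (hP1 : ∀ s, ∑ t, P s t = 1) (s : S)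
    (T : Set S) : BddAbove (Set.range fun n => Pr P n s T) :=
  ⟨1, by rintro _ ⟨n, rfl⟩; exact Pr_le_one hP0 hP1 T n s⟩

lemma Pr_union_le (hP0 : ∀ s t, 0 ≤ P s t) (G B : Set S) (n : ℕ) (s : S) :
    Pr P n s (G ∪ B) ≤ Pr P n s G + Pr P n s B := by
  have hG := Pr_nonneg hP0 G n s
  have hB := Pr_nonneg hP0 B n s
  cases n with
  | zero => unfold Pr; split_ifs <;> simp_all
  | succ n =>
    by_cases hs : s ∈ G ∪ B
    · rcases hs with hs | hs <;>
        simp only [Pr, hs, Set.mem_union, true_or, or_true, if_true] at hG hB ⊢ <;> linarith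
    · obtain ⟨hsG, hsB⟩ := not_or.mp hs
      simp only [Pr, hs, hsG, hsB, if_false, ← Finset.sum_add_distrib, ← mul_add]
      gcongr with t
      · exact hP0 s t
      · exact Pr_union_le hP0 G B n t

lemma Prob_union_le (hP0 : ∀ s t, 0 ≤ P s t) (hP1 : ∀ s, ∑ t, P s t = 1) (s : S)
    (G B : Set S) : Prob P s (G ∪ B) ≤ Prob P s G + Prob P s B :=
  ciSup_le fun n => (Pr_union_le hP0 G B n s).trans <|
    add_le_add (le_ciSup (bddAbove_range_Pr hP0 hP1 s G) n)
      (le_ciSup (bddAbove_range_Pr hP0 hP1 s B) n)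

lemma Pr_pos_of_path (hP0 : ∀ s t, 0 ≤ P s t) (T : Set S) {m n : ℕ} (u : ℕ → S)
    (hu : ∀ i < m, 0 < P (u i) (u (i + 1))) (hum : u m ∈ T) (hmn : m ≤ n) :
    0 < Pr P n (u 0) T := by
  induction m generalizing u n with
  | zero => cases n <;> simp [Pr, hum]
  | succ m ih =>
    obtain ⟨n, rfl⟩ : ∃ k, n = k + 1 := ⟨n - 1, by omega⟩
    unfold Pr; split_ifs
    · exact zero_lt_one
    · have hstep : 0 < P (u 0) (u 1) * Pr P n (u 1) T :=
        mul_pos (hu 0 m.succ_pos)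
          (ih (fun i => u (i + 1)) (fun i hi => hu (i + 1) (by omega)) hum (by omega))
      exact hstep.trans_le <| Finset.single_le_sum
        (fun t _ => mul_nonneg (hP0 _ t) (Pr_nonneg hP0 T n t)) (Finset.mem_univ (u 1))

lemma exists_Pr_pos_of_forall_hasPathTo (hP0 : ∀ s t, 0 ≤ P s t) {T : Set S}
    (hpath : ∀ s, HasPathTo P s T) : ∃ N, ∀ s, 0 < Pr P N s T := by
  choose m u hu0 hu hum using hpath
  refine ⟨Finset.univ.sup m, fun s => ?_⟩
  rw [← hu0 s]
  exact Pr_pos_of_path hP0 T (u s) (hu s) (hum s) (Finset.le_sup (Finset.mem_univ s))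

lemma one_sub_Pr_add_le (hP0 : ∀ s t, 0 ≤ P s t) (hP1 : ∀ s, ∑ t, P s t = 1) (T : Set S)
    {b : ℕ} {M : ℝ} (hM : ∀ t, 1 - Pr P b t T ≤ M) (a : ℕ) (s : S) :
    1 - Pr P (a + b) s T ≤ (1 - Pr P a s T) * M := by
  induction a generalizing s with
  | zero =>
    by_cases hs : s ∈ T
    · cases b <;> simp [Pr, hs]
    · simpa [Pr, hs] using hM s
  | succ a ih =>
    rw [Nat.add_right_comm]
    by_cases hs : s ∈ T
    · simp [Pr, hs]
    -- off `T`, `1 - Pr` satisfies the same recursion as `Pr`, since the rows of `P` sum to `1`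
    have hmiss : ∀ n, 1 - Pr P (n + 1) s T = ∑ t, P s t * (1 - Pr P n t T) := fun n => by
      simp only [Pr, hs, if_false, mul_sub, mul_one, Finset.sum_sub_distrib, hP1 s]
    rw [hmiss, hmiss, Finset.sum_mul]
    exact Finset.sum_le_sum fun t _ => by
      rw [mul_assoc]; exact mul_le_mul_of_nonneg_left (ih t) (hP0 s t)

lemma one_sub_Pr_mul_le_pow (hP0 : ∀ s t, 0 ≤ P s t) (hP1 : ∀ s, ∑ t, P s t = 1) (T : Set S)
    {N : ℕ} {M : ℝ} (hM0 : 0 ≤ M) (hM : ∀ t, 1 - Pr P N t T ≤ M) (k : ℕ) (s : S) :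
    1 - Pr P (k * N) s T ≤ M ^ k := by
  induction k generalizing s with
  | zero => rw [zero_mul, pow_zero]; linarith [Pr_nonneg hP0 T 0 s]
  | succ k ih =>
    rw [Nat.succ_mul, pow_succ]
    exact (one_sub_Pr_add_le hP0 hP1 T hM _ s).trans (mul_le_mul_of_nonneg_right (ih s) hM0)

lemma exists_one_sub_Pr_le_lt_one [Nonempty S] (hP0 : ∀ s t, 0 ≤ P s t)
    (hP1 : ∀ s, ∑ t, P s t = 1) {T : Set S} (hpath : ∀ s, HasPathTo P s T) :
    ∃ N M, 0 ≤ M ∧ M < 1 ∧ ∀ s, 1 - Pr P N s T ≤ M := by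
  obtain ⟨N, hN⟩ := exists_Pr_pos_of_forall_hasPathTo hP0 hpath
  set M := Finset.univ.sup' Finset.univ_nonempty fun s => 1 - Pr P N s T
  have hle : ∀ s, 1 - Pr P N s T ≤ M := fun s =>
    Finset.le_sup' (fun s => 1 - Pr P N s T) (Finset.mem_univ s)
  refine ⟨N, M, ?_, ?_, hle⟩
  · exact (sub_nonneg.mpr (Pr_le_one hP0 hP1 T N (Classical.arbitrary S))).trans (hle _)
  · exact (Finset.sup'_lt_iff _).mpr fun s _ => by linarith [hN s]

lemma Prob_eq_one_of_forall_hasPathTo (hP0 : ∀ s t, 0 ≤ P s t) (hP1 : ∀ s, ∑ t, P s t = 1)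
    {T : Set S} (hpath : ∀ s, HasPathTo P s T) (s : S) : Prob P s T = 1 := by
  have : Nonempty S := ⟨s⟩
  obtain ⟨N, M, hM0, hM1, hM⟩ := exists_one_sub_Pr_le_lt_one hP0 hP1 hpath
  refine le_antisymm (ciSup_le fun n => Pr_le_one hP0 hP1 T n s) ?_
  have htend : Filter.Tendsto (fun k : ℕ => 1 - M ^ k) Filter.atTop (nhds 1) := by
    simpa using tendsto_const_nhds.sub (tendsto_pow_atTop_nhds_zero_of_lt_one hM0 hM1)
  refine le_of_tendsto' htend fun k => ?_
  have hk := one_sub_Pr_mul_le_pow hP0 hP1 T hM0 hM k s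
  have hle := le_ciSup (bddAbove_range_Pr hP0 hP1 s T) (k * N)
  unfold Prob
  linarith

end Reachability

lemma hasPathTo_union_BSet {S : Type*} (P : S → S → ℝ) (G : Set S) (s : S) :
    HasPathTo P s (G ∪ BSet P G) := by
  by_cases hs : s ∈ BSet P G
  · exact ⟨0, fun _ => s, rfl, fun i hi => absurd hi (Nat.not_lt_zero i), Or.inr hs⟩
  · simp only [BSet, Set.mem_ofPred_eq, not_not] at hs
    obtain ⟨m, u, hu0, hu, hum⟩ := hs
    exact ⟨m, u, hu0, hu, Or.inl hum⟩

theorem stmt_8_general {S : Type*} [Fintype S] (P : S → S → ℝ)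
    (hP0 : ∀ s t, 0 ≤ P s t) (hP1 : ∀ s, ∑ t, P s t = 1)
    (s0 : S) (G : Set S) :
    Prob P s0 G + Prob P s0 (BSet P G) ≥ 1 ∧
    ∀ lam : ℝ, Prob P s0 G ≤ lam → Prob P s0 (BSet P G) ≥ 1 - lam := by
  have hcover := Prob_eq_one_of_forall_hasPathTo hP0 hP1 (hasPathTo_union_BSet P G) s0
  have hsub := Prob_union_le hP0 hP1 s0 G (BSet P G)
  exact ⟨by linarith, fun lam hlam => by linarith⟩

/-- safety–liveness duality. -/
theorem stmt_8 {S : Type*} [Fintype S] [Nonempty S] (P : S → S → ℝ)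
    (hP0 : ∀ s t, 0 ≤ P s t) (hP1 : ∀ s, ∑ t, P s t = 1)
    (s0 : S) (G : Set S) :
    Prob P s0 G + Prob P s0 (BSet P G) ≥ 1 ∧
    ∀ lam : ℝ, Prob P s0 G ≤ lam → Prob P s0 (BSet P G) ≥ 1 - lam :=
  stmt_8_general P hP0 hP1 s0 G
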